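/- Let $p$ be a positive integer and $M_1, M_2$ integers with $M_1 \not\equiv M_2 \pmod{p}$. Let $x \geq 1$ and set $F_k(x) = \sum_{r \in \mathbb{Z}} \exp(-\pi (k/p + r)^2 x^2)$ for $|k| \le (p-1)/2$. Then there is an absolute constant $C > 0$ such that $\left|\sum_{k=-(p-1)/2}^{(p-1)/2} F_k(x)\, e\left(k \cdot \frac{M_1 - M_2}{p}\right)\right| \le C \left\| \frac{M_1 - M_2}{p} \right\|^{-1}$, where $e(z) = e^{2\pi i z}$ and $\|z\|$ denotes the distance from $z$ to the nearest integer. -/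

import Mathlib

open Real

noncomputable def F (p : ℕ) (k : ℤ) (x : ℝ) : ℝ :=
  ∑' r : ℤ, Real.exp (-π * ((k : ℝ) / p + r) ^ 2 * x ^ 2)

noncomputable def e (z : ℝ) : ℂ := Complex.exp (2 * (π : ℂ) * Complex.I * (z : ℂ))

/-- distance to the nearest integer -/
noncomputable def nint (z : ℝ) : ℝ := |z - round z|

/-!
Writing `n = k + r p`, the double sum over `|k| ≤ (p - 1) / 2` and `r ∈ ℤ` is a single theta
series `∑ₙ exp (-π n² / s²) e (n α)` with `s = p / x` and `α = (M₁ - M₂) / p`, because `p α` is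
an integer. Poisson summation turns it into the positive quantity `s ∑ₙ exp (-π s² (n - α)²)`.
The term with `n = round α` contributes at most `‖α‖⁻¹` since `u ≤ exp (π u²)`; every other `n`
lies at distance at least `|n - round α| / 2` from `α`, so by the integral test those terms
contribute at most `2 ≤ ‖α‖⁻¹`.
-/

open Set

theorem Int.tsum_eq_sum_Ico_tsum {R : Type*} [AddCommGroup R] [UniformSpace R]
    [IsUniformAddGroup R] [CompleteSpace R] [T0Space R] {f : ℤ → R} (hf : Summable f)
    (a : ℤ) (N : ℕ) [NeZero N] :
    ∑' n, f n = ∑ k ∈ Finset.Ico a (a + N), ∑' q : ℤ, f (k + q * N) := by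
  have hg : Summable fun rq : Fin N × ℤ ↦ f (rq.2 * N + rq.1 + a) :=
    hf.comp_injective ((Equiv.prodComm _ _).trans
      ((Int.divModEquiv N).symm.trans (Equiv.addRight a))).injective
  rw [← (Equiv.addRight a).tsum_eq, ← (Int.divModEquiv N).symm.tsum_eq,
    ← (Equiv.prodComm _ _).tsum_eq]
  simp only [Equiv.coe_addRight, Int.divModEquiv_symm_apply, Equiv.prodComm_apply,
    Prod.fst_swap, Prod.snd_swap]
  rw [hg.tsum_prod, tsum_fintype, Int.Ico_eq_finset_map, Finset.sum_map, add_sub_cancel_left,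
    Int.toNat_natCast, ← Fin.sum_univ_eq_sum_range]
  refine Finset.sum_congr rfl fun r _ ↦ tsum_congr fun q ↦ ?_
  simp only [Function.Embedding.trans_apply, Nat.castEmbedding_apply, addLeftEmbedding_apply]
  congr 1
  ring

section Gaussian

variable {c : ℝ}

lemma antitoneOn_exp_neg_mul_sq (hc : 0 ≤ c) :
    AntitoneOn (fun t : ℝ ↦ rexp (-c * t ^ 2)) (Ici 0) :=
  fun s hs t _ hst ↦ exp_le_exp.2 <| by
    have := pow_le_pow_left₀ (mem_Ici.1 hs) hst 2
    nlinarith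

lemma summable_exp_neg_mul_sq_nat (hc : 0 < c) : Summable fun j : ℕ ↦ rexp (-c * (j : ℝ) ^ 2) :=
  (antitoneOn_exp_neg_mul_sq hc.le).summable_of_integrableOn_Ioi_zero
    (integrable_exp_neg_mul_sq hc).integrableOn fun _ _ ↦ (exp_pos _).le

lemma tsum_exp_neg_mul_sq_nat_add_one_le (hc : 0 < c) :
    ∑' j : ℕ, rexp (-c * ((j : ℝ) + 1) ^ 2) ≤ √(π / c) / 2 := by
  rw [← integral_gaussian_Ioi]
  exact_mod_cast (antitoneOn_exp_neg_mul_sq hc.le).tsum_add_one_le_integral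
    (integrable_exp_neg_mul_sq hc).integrableOn fun _ _ ↦ (exp_pos _).le

lemma summable_exp_neg_mul_int_sq (hc : 0 < c) : Summable fun n : ℤ ↦ rexp (-c * (n : ℝ) ^ 2) :=
  .of_nat_of_neg (by simpa using summable_exp_neg_mul_sq_nat hc)
    (by simpa using summable_exp_neg_mul_sq_nat hc)

lemma exp_neg_mul_sq_sub_le (hc : 0 ≤ c) {t δ : ℝ} (ht : 1 ≤ |t|) (hδ : |δ| ≤ 1 / 2) :
    rexp (-c * (t - δ) ^ 2) ≤ rexp (-(c / 4) * t ^ 2) := by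
  have : |t| / 2 ≤ |t - δ| := by linarith [abs_sub_abs_le_abs_sub t δ]
  have := pow_le_pow_left₀ (by positivity) this 2
  rw [div_pow, sq_abs, sq_abs] at this
  exact exp_le_exp.2 (by nlinarith)

lemma tsum_exp_neg_mul_sq_sub_le (hc : 0 < c) {δ : ℝ} (hδ : |δ| ≤ 1 / 2) :
    ∑' n : ℤ, rexp (-c * (n - δ) ^ 2) ≤ rexp (-c * δ ^ 2) + √(π / (c / 4)) := by
  set g : ℝ → ℝ := fun t ↦ rexp (-c * (t - δ) ^ 2)
  have hc4 : 0 < c / 4 := by positivity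
  have hdom : ∀ t : ℝ, 1 ≤ |t| → g t ≤ rexp (-(c / 4) * t ^ 2) :=
    fun t ht ↦ exp_neg_mul_sq_sub_le hc.le ht hδ
  have hmaj : Summable fun j : ℕ ↦ rexp (-(c / 4) * ((j : ℝ) + 1) ^ 2) := by
    exact_mod_cast (summable_nat_add_iff 1).2 (summable_exp_neg_mul_sq_nat hc4)
  have h1 : ∀ j : ℕ, 1 ≤ |(j : ℝ) + 1| := fun j ↦ by
    rw [abs_of_pos (by positivity)]; linarith [j.cast_nonneg (α := ℝ)]
  have hdom_pos : ∀ j : ℕ, g ((j : ℝ) + 1) ≤ rexp (-(c / 4) * ((j : ℝ) + 1) ^ 2) :=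
    fun j ↦ hdom _ (h1 j)
  have hdom_neg : ∀ j : ℕ, g (-((j : ℝ) + 1)) ≤ rexp (-(c / 4) * ((j : ℝ) + 1) ^ 2) :=
    fun j ↦ (hdom _ (by rw [abs_neg]; exact h1 j)).trans_eq (by rw [neg_sq])
  have hpos : Summable fun j : ℕ ↦ g ((j : ℝ) + 1) :=
    hmaj.of_nonneg_of_le (fun _ ↦ (exp_pos _).le) hdom_pos
  have hneg : Summable fun j : ℕ ↦ g (-((j : ℝ) + 1)) :=
    hmaj.of_nonneg_of_le (fun _ ↦ (exp_pos _).le) hdom_neg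
  have hsplit : ∑' n : ℤ, g n
      = g 0 + ∑' j : ℕ, g ((j : ℝ) + 1) + ∑' j : ℕ, g (-((j : ℝ) + 1)) := by
    have hnat : Summable fun j : ℕ ↦ g j := (summable_nat_add_iff 1).1 (by exact_mod_cast hpos)
    rw [tsum_of_nat_of_neg_add_one (f := fun n : ℤ ↦ g n) (by simpa using hnat)
      (by simpa using hneg)]
    push_cast
    rw [hnat.tsum_eq_zero_add]
    simp
  have htail := tsum_exp_neg_mul_sq_nat_add_one_le hc4
  calc ∑' n : ℤ, rexp (-c * (n - δ) ^ 2) = ∑' n : ℤ, g n := rfl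
    _ ≤ g 0 + √(π / (c / 4)) / 2 + √(π / (c / 4)) / 2 := by
      rw [hsplit]
      gcongr
      · exact (hpos.tsum_le_tsum hdom_pos hmaj).trans htail
      · exact (hneg.tsum_le_tsum hdom_neg hmaj).trans htail
    _ = rexp (-c * δ ^ 2) + √(π / (c / 4)) := by
      rw [add_assoc, add_halves]; simp [g]

lemma le_exp_pi_mul_sq (u : ℝ) : u ≤ rexp (π * u ^ 2) := by
  nlinarith [add_one_le_exp (π * u ^ 2), pi_gt_three, sq_nonneg u, sq_nonneg (u - 1 / 6)]

lemma mul_exp_neg_pi_mul_sq_le {s δ : ℝ} (hδ : δ ≠ 0) :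
    s * rexp (-(π * s ^ 2) * δ ^ 2) ≤ |δ|⁻¹ := by
  have hδ' : 0 < |δ| := abs_pos.2 hδ
  have hu : s * |δ| / rexp (π * (s * |δ|) ^ 2) ≤ 1 :=
    (div_le_one (exp_pos _)).2 (le_exp_pi_mul_sq _)
  have heq : s * rexp (-(π * s ^ 2) * δ ^ 2) = s * |δ| / rexp (π * (s * |δ|) ^ 2) / |δ| := by
    rw [mul_pow, sq_abs, show -(π * s ^ 2) * δ ^ 2 = -(π * (s ^ 2 * δ ^ 2)) by ring, exp_neg]
    field_simp
  rw [heq, ← one_div]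
  exact div_le_div_of_nonneg_right hu hδ'.le

end Gaussian

lemma mul_tsum_exp_neg_pi_mul_sq_sub_le {s α : ℝ} (hs : 0 < s) (hα : 0 < nint α) :
    s * ∑' n : ℤ, rexp (-(π * s ^ 2) * (n - α) ^ 2) ≤ 2 * (nint α)⁻¹ := by
  set δ := α - round α
  have hδ : |δ| ≤ 1 / 2 := abs_sub_round α
  have hδ0 : δ ≠ 0 := abs_pos.1 hα
  have hshift : ∑' n : ℤ, rexp (-(π * s ^ 2) * (n - α) ^ 2)
      = ∑' m : ℤ, rexp (-(π * s ^ 2) * (m - δ) ^ 2) := by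
    rw [← (Equiv.addRight (round α)).tsum_eq]
    congr! 4 with m
    simp only [Equiv.coe_addRight, Int.cast_add, δ]
    ring
  have hsqrt : √(π / (π * s ^ 2 / 4)) = 2 / s := by
    rw [show π / (π * s ^ 2 / 4) = (2 / s) ^ 2 by field_simp; ring, sqrt_sq (by positivity)]
  have hinv : 2 ≤ |δ|⁻¹ := by
    rw [le_inv_comm₀ two_pos (abs_pos.2 hδ0)]; linarith
  calc s * ∑' n : ℤ, rexp (-(π * s ^ 2) * (n - α) ^ 2)
      ≤ s * (rexp (-(π * s ^ 2) * δ ^ 2) + 2 / s) := by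
        rw [hshift, ← hsqrt]
        gcongr
        exact tsum_exp_neg_mul_sq_sub_le (by positivity) hδ
    _ = s * rexp (-(π * s ^ 2) * δ ^ 2) + 2 := by field_simp
    _ ≤ |δ|⁻¹ + |δ|⁻¹ := add_le_add (mul_exp_neg_pi_mul_sq_le hδ0) hinv
    _ = 2 * (nint α)⁻¹ := by rw [nint]; ring

lemma e_add_intCast (z : ℝ) (m : ℤ) : e (z + m) = e z := by
  rw [e, e, Complex.ofReal_add, mul_add, Complex.exp_add, Complex.ofReal_intCast,
    mul_comm _ (m : ℂ), Complex.exp_int_mul_two_pi_mul_I, mul_one]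

lemma norm_e (z : ℝ) : ‖e z‖ = 1 := by
  rw [e, Complex.norm_exp]
  simp

lemma nint_div_pos {m : ℤ} {p : ℕ} (hp : 0 < p) (hm : ¬ (p : ℤ) ∣ m) : 0 < nint (m / p) := by
  refine abs_pos.2 (sub_ne_zero.2 fun h ↦ hm ⟨round ((m : ℝ) / p), ?_⟩)
  rw [div_eq_iff (by positivity)] at h
  exact_mod_cast h.trans (mul_comm _ _)

noncomputable def thetaTerm (s α : ℝ) (n : ℤ) : ℂ := (rexp (-π * n ^ 2 / s ^ 2) : ℂ) * e (n * α)

lemma summable_thetaTerm {s : ℝ} (hs : s ≠ 0) (α : ℝ) : Summable (thetaTerm s α) := by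
  refine .of_norm ((summable_exp_neg_mul_int_sq (c := π / s ^ 2) (by positivity)).congr fun n ↦ ?_)
  rw [thetaTerm, norm_mul, norm_e, mul_one, Complex.norm_real, norm_of_nonneg (exp_pos _).le]
  ring_nf

lemma tsum_thetaTerm {s : ℝ} (hs : 0 < s) (α : ℝ) :
    ∑' n : ℤ, thetaTerm s α n
      = ((s * ∑' n : ℤ, rexp (-(π * s ^ 2) * (n - α) ^ 2) : ℝ) : ℂ) := by
  have ha : 0 < ((s ^ 2)⁻¹ : ℂ).re := by
    rw [← Complex.ofReal_pow, ← Complex.ofReal_inv, Complex.ofReal_re]; positivity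
  have hroot : ((s ^ 2)⁻¹ : ℂ) ^ (1 / 2 : ℂ) = (s⁻¹ : ℝ) := by
    rw [← Complex.ofReal_pow, ← Complex.ofReal_inv,
      show (1 / 2 : ℂ) = ((1 / 2 : ℝ) : ℂ) by norm_num,
      ← Complex.ofReal_cpow (by positivity), ← sqrt_eq_rpow, sqrt_inv, sqrt_sq hs.le]
  have := Complex.tsum_exp_neg_quadratic ha (Complex.I * α)
  rw [hroot] at this
  convert this using 1
  · refine tsum_congr fun n ↦ ?_
    rw [thetaTerm, e, Complex.ofReal_exp, ← Complex.exp_add]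
    congr 1
    push_cast
    ring
  · rw [Complex.ofReal_mul, Complex.ofReal_tsum, Complex.ofReal_inv, one_div, inv_inv]
    congr 1
    refine tsum_congr fun n ↦ ?_
    rw [Complex.ofReal_exp]
    congr 1
    push_cast
    rw [div_inv_eq_mul, ← mul_assoc Complex.I, Complex.I_mul_I]
    ring

lemma F_mul_e_eq_tsum_thetaTerm {p : ℕ} (hp : p ≠ 0) (k : ℤ) {x α : ℝ} (hx : x ≠ 0) {M : ℤ}
    (hM : (p : ℝ) * α = M) :
    (F p k x : ℂ) * e (k * α) = ∑' r : ℤ, thetaTerm (p / x) α (k + r * p) := by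
  rw [F, Complex.ofReal_tsum, ← tsum_mul_right]
  refine tsum_congr fun r ↦ ?_
  have hexp :
      -π * ((k : ℝ) / p + r) ^ 2 * x ^ 2 = -π * ((k + r * p : ℤ) : ℝ) ^ 2 / (p / x) ^ 2 := by
    push_cast
    field_simp
  have hphase : ((k + r * p : ℤ) : ℝ) * α = k * α + (r * M : ℤ) := by
    push_cast
    rw [← hM]
    ring
  rw [thetaTerm, hexp, ← e_add_intCast _ (r * M), ← hphase]

theorem F_exp_sum_bound :
    ∃ C > 0, ∀ (p : ℕ), 0 < p → Odd p → ∀ (M₁ M₂ : ℤ), ¬ ((p : ℤ) ∣ (M₁ - M₂)) →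
      ∀ (x : ℝ), 1 ≤ x →
      ‖∑ k ∈ Finset.Icc (-(((p : ℤ) - 1) / 2)) (((p : ℤ) - 1) / 2),
          (F p k x : ℂ) * e ((k : ℝ) * (((M₁ : ℝ) - M₂) / p))‖
        ≤ C * (nint (((M₁ : ℝ) - M₂) / p))⁻¹ := by
  refine ⟨2, two_pos, fun p hp hodd M₁ M₂ hM x hx ↦ ?_⟩
  have : NeZero p := ⟨hp.ne'⟩
  set α : ℝ := ((M₁ : ℝ) - M₂) / p
  have hs : 0 < (p : ℝ) / x := div_pos (by exact_mod_cast hp) (by linarith)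
  have hpα : (p : ℝ) * α = (M₁ - M₂ : ℤ) := by
    push_cast
    exact mul_div_cancel₀ _ (by exact_mod_cast hp.ne')
  have hIcc : Finset.Icc (-(((p : ℤ) - 1) / 2)) (((p : ℤ) - 1) / 2)
      = Finset.Ico (-(((p : ℤ) - 1) / 2)) (-(((p : ℤ) - 1) / 2) + p) := by
    obtain ⟨t, rfl⟩ := hodd
    ext; simp; omega
  have hα : 0 < nint α := by simpa only [α, Int.cast_sub] using nint_div_pos hp hM
  rw [Finset.sum_congr hIcc fun k _ ↦ F_mul_e_eq_tsum_thetaTerm hp.ne' k (by linarith) hpα,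
    ← Int.tsum_eq_sum_Ico_tsum (summable_thetaTerm hs.ne' α), tsum_thetaTerm hs,
    Complex.norm_real, norm_of_nonneg (mul_nonneg hs.le (tsum_nonneg fun _ ↦ (exp_pos _).le))]
  exact mul_tsum_exp_neg_pi_mul_sq_sub_le hs hα
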